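/- For any measurable function f on ℝ², the two-dimensional decreasing rearrangement equals the iterated (multivariate) rearrangement: f₂*(s,t) = (R_t)^{*x}(s), where R_t(x) = (f_x)^{*y}(t) is the decreasing rearrangement in y of f_x(y) = f(x,y), and then one takes the decreasing rearrangement in x. -/

import Mathlib

open MeasureTheory Set ENNReal Filter

/-!
Both sides are governed by the same duality: `a < g*(s)` iff the distribution function of `g`
at level `a` exceeds `s`. Applied twice, it shows that `(s, t)` lies in the rearranged
superlevel set `{|f| > a}*` exactly when `a < (R_t)^{*x}(s)`, so the layer-cake integral defining
`f₂*(s, t)` is the length of the interval `(0, (R_t)^{*x}(s))`.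
-/

/-- Classical decreasing rearrangement of an `ℝ≥0∞`-valued function. -/
noncomputable def decRe {α : Type*} [MeasurableSpace α] (μ : Measure α)
    (g : α → ℝ≥0∞) (t : ℝ) : ℝ≥0∞ :=
  sInf {l : ℝ≥0∞ | μ {x | l < g x} ≤ ENNReal.ofReal t}

/-- `φ_E(x)`: the measure of the `x`-section of `E`. -/
noncomputable def phiSec (E : Set (ℝ × ℝ)) (x : ℝ) : ℝ≥0∞ :=
  volume {y : ℝ | (x, y) ∈ E}

/-- The two-dimensional decreasing rearrangement `E*` of a set `E ⊆ ℝ²`. -/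
def starSet (E : Set (ℝ × ℝ)) : Set (ℝ × ℝ) :=
  {p | 0 < p.1 ∧ 0 < p.2 ∧ ENNReal.ofReal p.2 < decRe volume (phiSec E) p.1}

/-- The two-dimensional decreasing rearrangement `f₂*` of a function (layer-cake formula). -/
noncomputable def rearr2 (f : ℝ × ℝ → ℝ) (x : ℝ × ℝ) : ℝ≥0∞ :=
  ∫⁻ t in Set.Ioi (0 : ℝ), (starSet {p | t < |f p|}).indicator (fun _ => (1 : ℝ≥0∞)) x

/-- The open positive quadrant `ℝ₊²`. -/
def Quad : Set (ℝ × ℝ) := Set.Ioi 0 ×ˢ Set.Ioi 0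

section DecreasingRearrangement

variable {α : Type*} [MeasurableSpace α] (μ : Measure α) (g : α → ℝ≥0∞)

/-- The infimum defining `decRe` is attained, by continuity of `μ` along increasing unions. -/
lemma measure_decRe_lt_le (s : ℝ) : μ {x | decRe μ g s < g x} ≤ ENNReal.ofReal s := by
  set S : Set ℝ≥0∞ := {l | μ {x | l < g x} ≤ ENNReal.ofReal s} with hS
  rcases S.eq_empty_or_nonempty with hempty | hne
  · have htop : decRe μ g s = ⊤ := by rw [decRe, ← hS, hempty, sInf_empty]
    simp [htop]
  obtain ⟨u, hu_anti, hu_tendsto, hu_mem⟩ := exists_seq_tendsto_sInf hne (OrderBot.bddBelow S)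
  have hunion : {x | decRe μ g s < g x} = ⋃ n, {x | u n < g x} := by
    ext x
    simp only [mem_ofPred_eq, mem_iUnion]
    exact ⟨fun h => (hu_tendsto.eventually_lt_const h).exists,
      fun ⟨n, hn⟩ => (sInf_le (hu_mem n)).trans_lt hn⟩
  have hdir : Directed (· ⊆ ·) fun n => {x | u n < g x} :=
    Monotone.directed_le fun n m hnm x hx => (hu_anti hnm).trans_lt hx
  rw [hunion, hdir.measure_iUnion]
  exact iSup_le hu_mem

lemma lt_decRe_iff (s : ℝ) (a : ℝ≥0∞) :
    a < decRe μ g s ↔ ENNReal.ofReal s < μ {x | a < g x} := by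
  constructor
  · intro h
    by_contra! hle
    exact h.not_ge (sInf_le (show a ∈ {l | μ {x | l < g x} ≤ ENNReal.ofReal s} from hle))
  · intro h
    by_contra! hle
    have hsub : {x | a < g x} ⊆ {x | decRe μ g s < g x} := fun x hx => hle.trans_lt hx
    exact ((measure_mono hsub).trans (measure_decRe_lt_le μ g s)).not_gt h

end DecreasingRearrangement

lemma lt_phiSec_superlevel_iff (f : ℝ × ℝ → ℝ) {a : ℝ} (ha : 0 ≤ a) (t x : ℝ) :
    ENNReal.ofReal t < phiSec {p | a < |f p|} x ↔
      ENNReal.ofReal a < decRe volume (fun y => ENNReal.ofReal |f (x, y)|) t := by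
  have hsec : phiSec {p | a < |f p|} x
      = volume {y : ℝ | ENNReal.ofReal a < ENNReal.ofReal |f (x, y)|} := by
    simp only [phiSec, mem_ofPred_eq, ENNReal.ofReal_lt_ofReal_iff_of_nonneg ha]
  rw [hsec, lt_decRe_iff]

lemma mk_mem_starSet_superlevel_iff (f : ℝ × ℝ → ℝ) {a s t : ℝ} (ha : 0 ≤ a) (hs : 0 < s)
    (ht : 0 < t) :
    (s, t) ∈ starSet {p | a < |f p|} ↔
      ENNReal.ofReal a <
        decRe volume (fun x => decRe volume (fun y => ENNReal.ofReal |f (x, y)|) t) s := by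
  simp only [starSet, mem_ofPred_eq, hs, ht, true_and, lt_decRe_iff,
    lt_phiSec_superlevel_iff f ha]

lemma setLIntegral_Ioi_indicator_ofReal_lt (A : ℝ≥0∞) :
    ∫⁻ r in Ioi (0 : ℝ), {r : ℝ | ENNReal.ofReal r < A}.indicator (fun _ => 1) r = A := by
  have hmeas : MeasurableSet {r : ℝ | ENNReal.ofReal r < A} :=
    measurableSet_lt ENNReal.measurable_ofReal measurable_const
  rw [lintegral_indicator_const hmeas, one_mul, Measure.restrict_apply hmeas]
  rcases eq_or_ne A ⊤ with rfl | hA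
  · simp [Real.volume_Ioi]
  · have hIoo : {r : ℝ | ENNReal.ofReal r < A} ∩ Ioi 0 = Ioo 0 A.toReal := by
      ext r
      simp only [mem_inter_iff, mem_ofPred_eq, mem_Ioi, mem_Ioo]
      exact ⟨fun ⟨h, hr⟩ => ⟨hr, (ENNReal.ofReal_lt_iff_lt_toReal hr.le hA).mp h⟩,
        fun ⟨hr, h⟩ => ⟨(ENNReal.ofReal_lt_iff_lt_toReal hr.le hA).mpr h, hr⟩⟩
    rw [hIoo, Real.volume_Ioo, sub_zero, ENNReal.ofReal_toReal hA]

theorem stmt16_general (f : ℝ × ℝ → ℝ) :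
    ∀ s t : ℝ, 0 < s → 0 < t →
      rearr2 f (s, t)
        = decRe volume
            (fun x => decRe volume (fun y => ENNReal.ofReal |f (x, y)|) t) s := by
  intro s t hs ht
  set A := decRe volume (fun x => decRe volume (fun y => ENNReal.ofReal |f (x, y)|) t) s
  calc rearr2 f (s, t)
      = ∫⁻ r in Ioi (0 : ℝ), {r : ℝ | ENNReal.ofReal r < A}.indicator (fun _ => 1) r := by
        refine setLIntegral_congr_fun measurableSet_Ioi fun r hr => ?_
        simp only [indicator, mk_mem_starSet_superlevel_iff f (le_of_lt hr) hs ht, mem_ofPred_eq, A]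
    _ = A := setLIntegral_Ioi_indicator_ofReal_lt A

theorem stmt16 (f : ℝ × ℝ → ℝ) (hf : Measurable f) :
    ∀ s t : ℝ, 0 < s → 0 < t →
      rearr2 f (s, t)
        = decRe volume
            (fun x => decRe volume (fun y => ENNReal.ofReal |f (x, y)|) t) s :=
  stmt16_general f
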